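/- arXiv:2107.01959 — 10 statements merged into one kernel-verified Lean document; each statement's English description precedes it below -/
import Mathlib

section
/- Let M be a positive integer and let φ : ℝ → ℝ^N and ρ : ℝ^N → ℝ be functions such that for every multiset of M reals, max(x₁,…,x_M) = ρ(∑ᵢ φ(xᵢ)). Then the map Φ_M sending a multiset {x₁,…,x_M} to ∑ᵢ φ(xᵢ) is injective on multisets of size M. -/
/-- If `(φ, ρ)` is a sum-decomposition of the `max` function on `M`-element
multisets of reals, then the encoder `Φ_M(x) = ∑ i, φ (x i)` is injective on
multisets of size `M`. -/
theorem stmt_0 {M N : ℕ} (hM : 0 < M) (φ : ℝ → Fin N → ℝ) (ρ : (Fin N → ℝ) → ℝ)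
    (h : ∀ x : Fin M → ℝ,
      Finset.univ.sup' (Finset.univ_nonempty_iff.mpr ⟨⟨0, hM⟩⟩) x = ρ (∑ i, φ (x i))) :
    ∀ x y : Fin M → ℝ, (∑ i, φ (x i)) = (∑ i, φ (y i)) →
      (↑(List.ofFn x) : Multiset ℝ) = ↑(List.ofFn y) := by
  have hrep : ∀ m : Multiset ℝ, m.card = M →
      ∃ x : Fin M → ℝ, (↑(List.ofFn x) : Multiset ℝ) = m := by
    intro m hm
    induction m using Quotient.inductionOn with
    | _ l =>
      simp only [Multiset.quot_mk_to_coe, Multiset.coe_card] at hm ⊢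
      subst hm
      exact ⟨l.get, by rw [List.ofFn_get]⟩
  have hsum : ∀ x : Fin M → ℝ,
      ((↑(List.ofFn x) : Multiset ℝ).map φ).sum = ∑ i, φ (x i) := by
    intro x
    simp [List.map_ofFn, List.sum_ofFn, Function.comp]
  have key : ∀ k, k ≤ M → ∀ s t : Multiset ℝ, s.card = k → t.card = k →
      (s.map φ).sum = (t.map φ).sum → s = t := by
    intro k
    induction k with
    | zero =>
      intro _ s t hs ht _
      rw [Multiset.card_eq_zero] at hs ht
      rw [hs, ht]
    | succ k ih =>
      intro hk s t hs ht hsumst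
      have hsne : s ≠ 0 := by
        intro h0; rw [h0] at hs; simp at hs
      have htne : t ≠ 0 := by
        intro h0; rw [h0] at ht; simp at ht
      obtain ⟨b0, hb0⟩ := Multiset.exists_mem_of_ne_zero hsne
      have hFne : (s + t).toFinset.Nonempty :=
        ⟨b0, Multiset.mem_toFinset.mpr (Multiset.mem_add.mpr (Or.inl hb0))⟩
      set c : ℝ := (s + t).toFinset.min' hFne - 1 with hc_def
      have hc : ∀ b ∈ s + t, c < b := by
        intro b hb
        have := (s + t).toFinset.min'_le b (Multiset.mem_toFinset.mpr hb)
        simp only [hc_def]; linarith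
      set u : Multiset ℝ := Multiset.replicate (M - (k+1)) c with hu_def
      have hcards : (s + u).card = M := by
        simp [hu_def, hs]; omega
      have hcardt : (t + u).card = M := by
        simp [hu_def, ht]; omega
      obtain ⟨x, hx⟩ := hrep (s + u) hcards
      obtain ⟨y, hy⟩ := hrep (t + u) hcardt
      have hsumx : ∑ i, φ (x i) = (s.map φ).sum + (u.map φ).sum := by
        rw [← hsum x, hx, Multiset.map_add, Multiset.sum_add]
      have hsumy : ∑ i, φ (y i) = (t.map φ).sum + (u.map φ).sum := by
        rw [← hsum y, hy, Multiset.map_add, Multiset.sum_add]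
      have hsupeq : Finset.univ.sup' (Finset.univ_nonempty_iff.mpr ⟨⟨0, hM⟩⟩) x
          = Finset.univ.sup' (Finset.univ_nonempty_iff.mpr ⟨⟨0, hM⟩⟩) y := by
        rw [h x, h y, hsumx, hsumy, hsumst]
      set a : ℝ := Finset.univ.sup' (Finset.univ_nonempty_iff.mpr ⟨⟨0, hM⟩⟩) x with ha_def
      -- a is in s
      have hmem : ∀ (z : Fin M → ℝ) (w : Multiset ℝ), w ≠ 0 → (∀ b ∈ w, c < b) →
          (↑(List.ofFn z) : Multiset ℝ) = w + u →
          Finset.univ.sup' (Finset.univ_nonempty_iff.mpr ⟨⟨0, hM⟩⟩) z = a → a ∈ w := by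
        intro z w hwne hwc hz hza
        obtain ⟨i, _, hi⟩ := Finset.exists_mem_eq_sup'
          (Finset.univ_nonempty_iff.mpr ⟨⟨0, hM⟩⟩) z
        have hzi : z i ∈ w + u := by
          rw [← hz]
          exact Multiset.mem_coe.mpr (List.mem_ofFn.mpr ⟨i, rfl⟩)
        have hzia : z i = a := by rw [← hza, hi]
        rcases Multiset.mem_add.mp hzi with hw | hu
        · rwa [hzia] at hw
        · exfalso
          have hzc : z i = c := Multiset.eq_of_mem_replicate hu
          obtain ⟨b, hb⟩ := Multiset.exists_mem_of_ne_zero hwne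
          have hbm : b ∈ (↑(List.ofFn z) : Multiset ℝ) := by
            rw [hz]; exact Multiset.mem_add.mpr (Or.inl hb)
          obtain ⟨j, hj⟩ := List.mem_ofFn.mp (Multiset.mem_coe.mp hbm)
          have hble : b ≤ z i := by
            rw [hzia, ← hza]
            rw [← hj]
            exact Finset.le_sup' z (Finset.mem_univ j)
          have : c < b := hwc b hb
          linarith [hzc ▸ hble]
      have has : a ∈ s := hmem x s hsne (fun b hb => hc b (Multiset.mem_add.mpr (Or.inl hb))) hx rfl
      have hat : a ∈ t := hmem y t htne (fun b hb => hc b (Multiset.mem_add.mpr (Or.inr hb))) hy hsupeq.symm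
      have hse : s = a ::ₘ s.erase a := (Multiset.cons_erase has).symm
      have hte : t = a ::ₘ t.erase a := (Multiset.cons_erase hat).symm
      have hsum' : ((s.erase a).map φ).sum = ((t.erase a).map φ).sum := by
        have : φ a + ((s.erase a).map φ).sum = φ a + ((t.erase a).map φ).sum := by
          rw [← Multiset.sum_cons, ← Multiset.sum_cons, ← Multiset.map_cons,
            ← Multiset.map_cons, ← hse, ← hte]; exact hsumst
        exact add_left_cancel this
      have := ih (le_of_lt (Nat.lt_of_succ_le hk)) (s.erase a) (t.erase a)
        (by rw [Multiset.card_erase_of_mem has, hs]; rfl)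
        (by rw [Multiset.card_erase_of_mem hat, ht]; rfl)
        hsum'
      rw [hse, hte, this]
  intro x y hxy
  apply key M le_rfl
  · simp
  · simp
  · rw [hsum x, hsum y]; exact hxy
end

section
/- Let M be a positive integer and let f : ℝ^M → ℝ be a continuous permutation-invariant function. Then f is continuously sum-decomposable via ℝ^M: there exist continuous functions φ : ℝ → ℝ^M and ρ : ℝ^M → ℝ such that f(x) = ρ(∑_{i=1}^M φ(xᵢ)) for all x ∈ ℝ^M. -/
open MvPolynomial Finset in
lemma aux_esymm_eq {M : ℕ} (x y : Fin M → ℝ)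
    (hp : ∀ k, 0 < k → k ≤ M →
      eval x (psum (Fin M) ℝ k) = eval y (psum (Fin M) ℝ k)) :
    ∀ k, k ≤ M → eval x (esymm (Fin M) ℝ k) = eval y (esymm (Fin M) ℝ k) := by
  intro k
  induction k using Nat.strong_induction_on with
  | _ k ih =>
    intro hk
    rcases Nat.eq_zero_or_pos k with h0 | h0
    · subst h0; simp
    · have hx := congrArg (eval x) (psum_eq_mul_esymm_sub_sum (Fin M) ℝ k h0)
      have hy := congrArg (eval y) (psum_eq_mul_esymm_sub_sum (Fin M) ℝ k h0)
      simp only [map_sub, map_mul, map_pow, map_neg, map_one, map_natCast, map_sum] at hx hy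
      have hsum : ∑ a ∈ Finset.HasAntidiagonal.antidiagonal k with a.1 ∈ Set.Ioo 0 k,
            (-1:ℝ) ^ a.1 * eval x (esymm (Fin M) ℝ a.1) * eval x (psum (Fin M) ℝ a.2)
          = ∑ a ∈ Finset.HasAntidiagonal.antidiagonal k with a.1 ∈ Set.Ioo 0 k,
            (-1:ℝ) ^ a.1 * eval y (esymm (Fin M) ℝ a.1) * eval y (psum (Fin M) ℝ a.2) := by
        refine Finset.sum_congr rfl fun a ha => ?_
        simp only [Finset.mem_filter, Finset.HasAntidiagonal.mem_antidiagonal, Set.mem_Ioo] at ha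
        have h1 : a.1 + a.2 = k := ha.1
        rw [ih a.1 ha.2.2 (le_trans (le_of_lt ha.2.2) hk),
          hp a.2 (by omega) (by omega)]
      have hpk := hp k h0 hk
      rw [hx, hy] at hpk
      have hc : ((-1:ℝ) ^ (k+1) * (k:ℝ)) ≠ 0 :=
        mul_ne_zero (pow_ne_zero _ (by norm_num)) (Nat.cast_ne_zero.2 h0.ne')
      have : ((-1:ℝ) ^ (k+1) * (k:ℝ)) * eval x (esymm (Fin M) ℝ k)
          = ((-1:ℝ) ^ (k+1) * (k:ℝ)) * eval y (esymm (Fin M) ℝ k) := by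
        rw [hsum] at hpk
        linarith [hpk]
      exact mul_left_cancel₀ hc this

open MvPolynomial Finset in
lemma aux_multiset_eq {M : ℕ} (x y : Fin M → ℝ)
    (hp : ∀ k, 0 < k → k ≤ M → ∑ i, x i ^ k = ∑ i, y i ^ k) :
    Multiset.map x Finset.univ.val = Multiset.map y Finset.univ.val := by
  have hps : ∀ k, 0 < k → k ≤ M →
      eval x (psum (Fin M) ℝ k) = eval y (psum (Fin M) ℝ k) := by
    intro k h1 h2
    simpa [psum, MvPolynomial.eval_sum] using hp k h1 h2
  have he := aux_esymm_eq x y hps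
  have heval : ∀ (z : Fin M → ℝ) (n : ℕ),
      eval z (esymm (Fin M) ℝ n) = (Multiset.map z Finset.univ.val).esymm n := by
    intro z n
    rw [Finset.esymm_map_val, MvPolynomial.esymm, MvPolynomial.eval_sum]
    exact Finset.sum_congr rfl fun t _ => by rw [MvPolynomial.eval_prod]; simp
  have hme : ∀ k, k ≤ M → (Multiset.map x Finset.univ.val).esymm k
      = (Multiset.map y Finset.univ.val).esymm k := by
    intro k hk
    have := he k hk
    rwa [heval, heval] at this
  set sx := Multiset.map x Finset.univ.val with hsx
  set sy := Multiset.map y Finset.univ.val with hsy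
  have hcx : Multiset.card sx = M := by simp [hsx]
  have hcy : Multiset.card sy = M := by simp [hsy]
  have hpoly : (sx.map fun t => Polynomial.X - Polynomial.C t).prod = (sy.map fun t => Polynomial.X - Polynomial.C t).prod := by
    ext k
    rcases le_or_gt k M with hkM | hkM
    · rw [Multiset.prod_X_sub_C_coeff sx (hcx ▸ hkM),
        Multiset.prod_X_sub_C_coeff sy (hcy ▸ hkM), hcx, hcy,
        hme (M - k) (Nat.sub_le _ _)]
    · rw [Polynomial.coeff_eq_zero_of_natDegree_lt, Polynomial.coeff_eq_zero_of_natDegree_lt]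
      · rw [Polynomial.natDegree_multiset_prod_X_sub_C_eq_card, hcy]; exact hkM
      · rw [Polynomial.natDegree_multiset_prod_X_sub_C_eq_card, hcx]; exact hkM
  have := congrArg Polynomial.roots hpoly
  rwa [Polynomial.roots_multiset_prod_X_sub_C, Polynomial.roots_multiset_prod_X_sub_C] at this

lemma aux_perm {M : ℕ} (x y : Fin M → ℝ)
    (h : Multiset.map x Finset.univ.val = Multiset.map y Finset.univ.val) :
    ∃ σ : Equiv.Perm (Fin M), y = x ∘ σ := by
  have hperm : (List.ofFn (x ∘ Tuple.sort x)).Perm (List.ofFn (y ∘ Tuple.sort y)) := by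
    rw [← Multiset.coe_eq_coe]
    have h1 : (↑(List.ofFn (x ∘ Tuple.sort x)) : Multiset ℝ) = Multiset.map x Finset.univ.val := by
      rw [Fin.univ_val_map, Multiset.coe_eq_coe]
      exact Equiv.Perm.ofFn_comp_perm _ _
    have h2 : (↑(List.ofFn (y ∘ Tuple.sort y)) : Multiset ℝ) = Multiset.map y Finset.univ.val := by
      rw [Fin.univ_val_map, Multiset.coe_eq_coe]
      exact Equiv.Perm.ofFn_comp_perm _ _
    rw [h1, h2, h]
  have heq : x ∘ Tuple.sort x = y ∘ Tuple.sort y :=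
    List.ofFn_injective <| List.Perm.eq_of_sortedLE (Tuple.monotone_sort x).sortedLE_ofFn
      (Tuple.monotone_sort y).sortedLE_ofFn hperm
  refine ⟨(Tuple.sort y).symm.trans (Tuple.sort x), ?_⟩
  funext i
  have := congrFun heq ((Tuple.sort y).symm i)
  simpa using this.symm

/-- Every continuous permutation-invariant `f : ℝ^M → ℝ` is continuously
sum-decomposable via `ℝ^M`. -/
theorem stmt_4 {M : ℕ} (hM : 0 < M) (f : (Fin M → ℝ) → ℝ) (hf : Continuous f)
    (hsym : ∀ (x : Fin M → ℝ) (π : Equiv.Perm (Fin M)), f (x ∘ π) = f x) :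
    ∃ (φ : ℝ → Fin M → ℝ) (ρ : (Fin M → ℝ) → ℝ),
      Continuous φ ∧ Continuous ρ ∧
      ∀ x : Fin M → ℝ, f x = ρ (∑ i, φ (x i)) := by
  classical
  set g : (Fin M → ℝ) → (Fin M → ℝ) := fun x i => ∑ j, x j ^ ((i : ℕ) + 1) with hg
  have hgc : Continuous g := continuous_pi fun i =>
    continuous_finset_sum _ fun j _ => (continuous_apply j).pow _
  have hfib : ∀ x y, g x = g y → f x = f y := by
    intro x y hxy
    have hp : ∀ k, 0 < k → k ≤ M → ∑ i, x i ^ k = ∑ i, y i ^ k := by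
      intro k h1 h2
      have := congrFun hxy ⟨k - 1, by omega⟩
      simpa [hg, Nat.sub_add_cancel h1] using this
    obtain ⟨σ, rfl⟩ := aux_perm x y (aux_multiset_eq x y hp)
    exact (hsym x σ).symm
  have key : ∀ x : Fin M → ℝ, ‖x‖ ^ 2 ≤ ‖g x‖ + ‖g x‖ ^ 2 := by
    intro x
    rcases Nat.lt_or_ge M 2 with h2 | h2
    · have hM1 : M = 1 := by omega
      subst hM1
      have hx : ‖x‖ ≤ ‖g x‖ := by
        refine (pi_norm_le_iff_of_nonneg (norm_nonneg _)).2 fun i => ?_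
        have hgi : g x i = x i := by
          have h0 : i = 0 := Subsingleton.elim i 0
          subst h0
          simp [hg]
        rw [← hgi]
        exact norm_le_pi_norm (g x) i
      nlinarith [norm_nonneg (g x), norm_nonneg x]
    · set i2 : Fin M := ⟨1, h2⟩ with hi2
      have hgx : g x i2 = ∑ j, x j ^ 2 := by simp [hg, hi2]
      have h1 : ∀ i, x i ^ 2 ≤ g x i2 := by
        intro i; rw [hgx]
        exact Finset.single_le_sum (f := fun j => x j ^ 2)
          (fun j _ => sq_nonneg _) (Finset.mem_univ i)
      have h2' : ‖x‖ ≤ Real.sqrt ‖g x‖ := by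
        refine (pi_norm_le_iff_of_nonneg (Real.sqrt_nonneg _)).2 fun i => ?_
        refine Real.abs_le_sqrt ?_
        calc x i ^ 2 ≤ g x i2 := h1 i
          _ ≤ |g x i2| := le_abs_self _
          _ ≤ ‖g x‖ := norm_le_pi_norm (g x) i2
      have hsq : ‖x‖ ^ 2 ≤ ‖g x‖ := by
        have := pow_le_pow_left₀ (norm_nonneg x) h2' 2
        rwa [Real.sq_sqrt (norm_nonneg _)] at this
      nlinarith [norm_nonneg (g x)]
  have hproper : IsProperMap g := by
    rw [isProperMap_iff_isCompact_preimage]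
    refine ⟨hgc, fun K hK => ?_⟩
    refine Metric.isCompact_of_isClosed_isBounded (hK.isClosed.preimage hgc) ?_
    obtain ⟨C, hC⟩ := (isBounded_iff_forall_norm_le).1 hK.isBounded
    refine (isBounded_iff_forall_norm_le).2 ⟨max 1 (C + C ^ 2), fun x hx => ?_⟩
    have h1 := key x
    have h2 := hC (g x) hx
    have h3 : (0:ℝ) ≤ ‖g x‖ := norm_nonneg _
    have h4 : (0:ℝ) ≤ ‖x‖ := norm_nonneg _
    rcases le_or_gt ‖x‖ 1 with h | h
    · exact le_trans h (le_max_left _ _)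
    · have h5 : ‖x‖ ≤ ‖x‖ ^ 2 := by nlinarith
      have h6 : ‖x‖ ≤ C + C ^ 2 := by nlinarith
      exact le_trans h6 (le_max_right _ _)
  set S := Set.range g with hS
  have hSclosed : IsClosed S := hproper.isClosed_range
  set g' : (Fin M → ℝ) → S := fun x => ⟨g x, ⟨x, rfl⟩⟩ with hg'
  have hg'c : Continuous g' := hgc.subtype_mk _
  have hg'closed : IsClosedMap g' := by
    intro C hC
    have hclosed : IsClosed (g '' C) := hproper.isClosedMap C hC
    have himg : g' '' C = Subtype.val ⁻¹' (g '' C) := by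
      ext s
      simp only [Set.mem_image, Set.mem_preimage, hg', Subtype.ext_iff]
    rw [himg]
    exact hclosed.preimage continuous_subtype_val
  have hg'surj : Function.Surjective g' := by
    rintro ⟨s, x, rfl⟩; exact ⟨x, rfl⟩
  have hquot : Topology.IsQuotientMap g' := hg'closed.isQuotientMap hg'c hg'surj
  set ρ₀ : S → ℝ := fun s => f (hg'surj s).choose with hρ₀def
  have hρ₀ : ∀ x, ρ₀ (g' x) = f x := fun x =>
    hfib _ _ (congrArg Subtype.val ((hg'surj (g' x)).choose_spec))
  have hρ₀c : Continuous ρ₀ := by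
    rw [hquot.continuous_iff]
    have : ρ₀ ∘ g' = f := funext hρ₀
    rw [this]; exact hf
  obtain ⟨ρC, hρC⟩ := (ContinuousMap.mk ρ₀ hρ₀c).exists_restrict_eq hSclosed
  refine ⟨fun t i => t ^ ((i : ℕ) + 1), ρC, ?_, ρC.continuous, ?_⟩
  · exact continuous_pi fun i => continuous_pow _
  · intro x
    have hsg : (∑ i, fun j : Fin M => x i ^ ((j : ℕ) + 1)) = g x := by
      funext j
      simp [hg, Finset.sum_apply]
    rw [hsg]
    have h1 : ρC (g x) = ρ₀ (g' x) := by
      have := congrFun (congrArg DFunLike.coe hρC) (g' x)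
      simpa using this
    rw [h1, hρ₀ x]
end

section
/- Let N ∈ ℕ, let φ : [−1,1] → ℝ^N be any function with φ(−1) = 0, and define Γ_N : Δ_N → ℝ^N by Γ_N(x) = ∑_{i=1}^N (−1)^i φ(xᵢ) + φ(1)/2. If Γ_N has a zero in Δ_N, then there exist x⁺ ∈ X_{N+1}^{+1} and x⁻ ∈ X_{N+1}^{−1} with ∑_{i=1}^{N+1} φ(x⁺ᵢ) = ∑_{i=1}^{N+1} φ(x⁻ᵢ). -/
/-- `Δ_N`: descending-ordered points of `[-1,1]^N`. -/
def Delta (N : ℕ) : Set (Fin N → ℝ) :=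
  {x | Antitone x ∧ ∀ i, x i ∈ Set.Icc (-1 : ℝ) 1}

/-- `X_M^{+1}`: points of `Δ_M` with `x₁ = 1`, `x₂ = x₃`, `x₄ = x₅`, …
(1-based indexing), and `x_M = -1` if `M` is even. -/
def Xplus (M : ℕ) : Set (Fin M → ℝ) :=
  {x | x ∈ Delta M ∧ (∀ h : 0 < M, x ⟨0, h⟩ = 1) ∧
    (∀ i : ℕ, i % 2 = 1 → ∀ h : i + 1 < M,
      x ⟨i, Nat.lt_of_succ_lt h⟩ = x ⟨i + 1, h⟩) ∧
    (M % 2 = 0 → ∀ h : 0 < M, x ⟨M - 1, Nat.sub_lt h one_pos⟩ = -1)}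

/-- `X_M^{-1}`: points of `Δ_M` with `x₁ = x₂`, `x₃ = x₄`, … (1-based indexing),
and `x_M = -1` if `M` is odd. -/
def Xminus (M : ℕ) : Set (Fin M → ℝ) :=
  {x | x ∈ Delta M ∧
    (∀ i : ℕ, i % 2 = 0 → ∀ h : i + 1 < M,
      x ⟨i, Nat.lt_of_succ_lt h⟩ = x ⟨i + 1, h⟩) ∧
    (M % 2 = 1 → ∀ h : 0 < M, x ⟨M - 1, Nat.sub_lt h one_pos⟩ = -1)}

lemma sum_div_two {E : Type*} [AddCommMonoid E] (w : ℕ → E) :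
    ∀ n, ∑ j ∈ Finset.range n, w (j / 2)
      = 2 • (∑ i ∈ Finset.range (n / 2), w i) + (if n % 2 = 1 then w (n / 2) else 0)
  | 0 => by simp
  | n + 1 => by
    rw [Finset.sum_range_succ, sum_div_two w n]
    rcases Nat.mod_two_eq_zero_or_one n with h1 | h1
    · 
      have h2 : (n + 1) % 2 = 1 := by omega
      have h3 : (n + 1) / 2 = n / 2 := by omega
      simp [h1, h2, h3]
    · have h2 : (n + 1) % 2 = 0 := by omega
      have h3 : (n + 1) / 2 = n / 2 + 1 := by omega
      rw [h1, h2, h3, if_pos rfl, if_neg (by omega), Finset.sum_range_succ,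
        smul_add, two_nsmul (w (n / 2))]
      abel

lemma sum_even_odd {E : Type*} [AddCommMonoid E] (u : ℕ → E) :
    ∀ n, ∑ i ∈ Finset.range n, u i
      = (∑ j ∈ Finset.range ((n + 1) / 2), u (2 * j))
        + ∑ j ∈ Finset.range (n / 2), u (2 * j + 1)
  | 0 => by simp
  | n + 1 => by
    rw [Finset.sum_range_succ, sum_even_odd u n]
    rcases Nat.mod_two_eq_zero_or_one n with h1 | h1
    · 
      have h2 : (n + 2) / 2 = (n + 1) / 2 + 1 := by omega
      have h3 : (n + 1) / 2 = n / 2 := by omega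
      rw [h2, h3, Finset.sum_range_succ]
      have : 2 * (n / 2) = n := by omega
      rw [this]
      abel
    · have h2 : (n + 2) / 2 = n / 2 + 1 := by omega
      have h3 : (n + 1) / 2 = n / 2 + 1 := by omega
      rw [h2, h3, Finset.sum_range_succ, Finset.sum_range_succ]
      have : 2 * (n / 2) + 1 = n := by omega
      rw [this]
      abel

/-- If `Γ_N(x) = ∑ i, (-1)^i φ(xᵢ) + φ(1)/2` has a zero in `Δ_N` (for `φ` with
`φ(-1) = 0`), then `Φ` identifies a point of `X_{N+1}^{+1}` with a point of
`X_{N+1}^{-1}`. -/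
theorem stmt_9 {N : ℕ} (φ : ℝ → Fin N → ℝ) (hφ : φ (-1) = 0)
    (hzero : ∃ z ∈ Delta N,
      (∑ i : Fin N, ((-1 : ℝ) ^ ((i : ℕ) + 1)) • φ (z i)) + (2⁻¹ : ℝ) • φ 1 = 0) :
    ∃ xp ∈ Xplus (N + 1), ∃ xm ∈ Xminus (N + 1),
      (∑ i, φ (xp i)) = ∑ i, φ (xm i) := by
  classical
  obtain ⟨z, hz, hsum⟩ := hzero
  -- extend z by -1
  set zext : ℕ → ℝ := fun j => if h : j < N then z ⟨j, h⟩ else -1 with hzextdef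
  have zext_mem : ∀ j, zext j ∈ Set.Icc (-1 : ℝ) 1 := by
    intro j
    by_cases h : j < N
    · simpa [zext, h] using hz.2 ⟨j, h⟩
    · simp [zext, h]
  have zext_out : ∀ j, N ≤ j → zext j = -1 := by
    intro j hj
    simp [zext, Nat.not_lt.mpr hj]
  have zext_anti : ∀ {j k : ℕ}, j ≤ k → zext k ≤ zext j := by
    intro j k hjk
    by_cases hk : k < N
    · have hj : j < N := lt_of_le_of_lt hjk hk
      simp only [zext, dif_pos hk, dif_pos hj]
      exact hz.1 (show (⟨j, hj⟩ : Fin N) ≤ ⟨k, hk⟩ from hjk)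
    · rw [zext_out k (Nat.not_lt.mp hk)]
      exact (zext_mem j).1
  set g : ℕ → ℝ := fun j => if j = 0 then 1 else zext (2 * ((j - 1) / 2) + 1) with hgdef
  set m : ℕ → ℝ := fun j => zext (2 * (j / 2)) with hmdef
  refine ⟨fun i => g i, ⟨⟨?_, ?_⟩, ?_, ?_, ?_⟩, fun i => m i, ⟨⟨?_, ?_⟩, ?_, ?_⟩, ?_⟩
  · -- Antitone g
    intro i j hij
    by_cases hi : (i : ℕ) = 0
    · simp only [g, hi, if_pos rfl]
      by_cases hj : (j : ℕ) = 0
      · simp [hj]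
      · simp only [if_neg hj]
        exact (zext_mem _).2
    · have hj : (j : ℕ) ≠ 0 := by
        have : (i : ℕ) ≤ j := hij
        omega
      simp only [g, if_neg hi, if_neg hj]
      refine zext_anti ?_
      have : (i : ℕ) ≤ j := hij
      omega
  · intro i
    by_cases hi : (i : ℕ) = 0
    · simp [g, hi]
    · simp only [g, if_neg hi]
      exact zext_mem _
  · intro h
    simp [g]
  · -- pair condition for Xplus
    intro i hi h
    simp only [g, if_neg (by omega : ¬ i = 0), if_neg (by omega : ¬ i + 1 = 0)]
    congr 2
    omega
  · -- tail of Xplus : N+1 even, i.e. N odd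
    intro hM h
    have hN : N % 2 = 1 := by omega
    simp only [Nat.add_sub_cancel, g, if_neg (by omega : ¬ N = 0)]
    rw [(by omega : 2 * ((N - 1) / 2) + 1 = N)]
    exact zext_out N le_rfl
  · -- Antitone m
    intro i j hij
    refine zext_anti ?_
    have : (i : ℕ) ≤ j := hij
    omega
  · intro i
    exact zext_mem _
  · -- pair condition for Xminus
    intro i hi h
    simp only [m]
    congr 2
    omega
  · -- tail of Xminus : N+1 odd, i.e. N even
    intro hM h
    have hN : N % 2 = 0 := by omega
    simp only [Nat.add_sub_cancel, m]
    rw [(by omega : 2 * (N / 2) = N)]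
    exact zext_out N le_rfl
  · -- the sums agree
    have hzz : ∀ i : Fin N, z i = zext i := by
      intro i
      simp [zext, i.isLt]
    -- rewrite hsum in terms of zext and split into even/odd parts
    rw [show (∑ i : Fin N, ((-1 : ℝ) ^ ((i : ℕ) + 1)) • φ (z i))
        = ∑ i ∈ Finset.range N, ((-1 : ℝ) ^ (i + 1)) • φ (zext i) by
      rw [← Fin.sum_univ_eq_sum_range (fun i => ((-1 : ℝ) ^ (i + 1)) • φ (zext i)) N]
      exact Finset.sum_congr rfl fun i _ => by rw [hzz i]] at hsum
    rw [sum_even_odd (fun i => ((-1 : ℝ) ^ (i + 1)) • φ (zext i)) N] at hsum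
    have heven : ∀ j : ℕ, ((-1 : ℝ) ^ (2 * j + 1)) • φ (zext (2 * j))
        = -(φ (zext (2 * j))) := by
      intro j
      rw [pow_succ, pow_mul]
      simp
    have hodd : ∀ j : ℕ, ((-1 : ℝ) ^ (2 * j + 1 + 1)) • φ (zext (2 * j + 1))
        = φ (zext (2 * j + 1)) := by
      intro j
      rw [pow_succ, pow_succ, pow_mul]
      simp
    simp only [heven, hodd] at hsum
    rw [Finset.sum_neg_distrib] at hsum
    -- Now compute both sides
    have hA : (∑ i : Fin (N + 1), φ (g i))
        = φ 1 + (2 • ∑ j ∈ Finset.range (N / 2), φ (zext (2 * j + 1))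
          + (if N % 2 = 1 then φ (zext (2 * (N / 2) + 1)) else 0)) := by
      rw [Fin.sum_univ_eq_sum_range (fun j => φ (g j)) (N + 1), Finset.sum_range_succ']
      have h0 : φ (g 0) = φ 1 := by simp [g]
      have hstep : ∀ j, φ (g (j + 1)) = φ (zext (2 * (j / 2) + 1)) := by
        intro j
        simp only [g, if_neg (Nat.succ_ne_zero j), Nat.add_sub_cancel]
      rw [h0, add_comm]
      congr 1
      calc ∑ j ∈ Finset.range N, φ (g (j + 1))
          = ∑ j ∈ Finset.range N, (fun t => φ (zext (2 * t + 1))) (j / 2) := by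
            exact Finset.sum_congr rfl fun j _ => hstep j
        _ = _ := by rw [sum_div_two (fun t => φ (zext (2 * t + 1))) N]
    have hB : (∑ i : Fin (N + 1), φ (m i))
        = 2 • ∑ j ∈ Finset.range ((N + 1) / 2), φ (zext (2 * j))
          + (if (N + 1) % 2 = 1 then φ (zext (2 * ((N + 1) / 2))) else 0) := by
      rw [Fin.sum_univ_eq_sum_range (fun j => φ (m j)) (N + 1)]
      calc ∑ j ∈ Finset.range (N + 1), φ (m j)
          = ∑ j ∈ Finset.range (N + 1), (fun t => φ (zext (2 * t))) (j / 2) := rfl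
        _ = _ := by rw [sum_div_two (fun t => φ (zext (2 * t))) (N + 1)]
    -- kill the leftover terms
    have hA' : (∑ i : Fin (N + 1), φ (g i))
        = φ 1 + 2 • ∑ j ∈ Finset.range (N / 2), φ (zext (2 * j + 1)) := by
      rw [hA]
      rcases Nat.mod_two_eq_zero_or_one N with h | h
      · rw [if_neg (by omega : ¬ N % 2 = 1)]; abel
      · rw [if_pos h, (by omega : 2 * (N / 2) + 1 = N),
          zext_out N le_rfl, hφ]
        abel
    have hB' : (∑ i : Fin (N + 1), φ (m i))
        = 2 • ∑ j ∈ Finset.range ((N + 1) / 2), φ (zext (2 * j)) := by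
      rw [hB]
      rcases Nat.mod_two_eq_zero_or_one N with h | h
      · rw [if_pos (by omega : (N + 1) % 2 = 1),
          (by omega : 2 * ((N + 1) / 2) = N), zext_out N le_rfl, hφ]
        abel
      · rw [if_neg (by omega : ¬ (N + 1) % 2 = 1)]; abel
    rw [hA', hB']
    -- conclude from hsum, pointwise
    funext k
    have hk := congrFun hsum k
    simp only [Pi.add_apply, Pi.neg_apply, Pi.smul_apply, Pi.zero_apply,
      Finset.sum_apply, smul_eq_mul, nsmul_eq_mul, Nat.cast_ofNat, Pi.mul_apply,
      Pi.ofNat_apply] at hk ⊢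
    linarith
end

section
/- Let M > N be positive integers. There exists a continuous permutation-invariant function f : ℝ^M → ℝ which is not max-decomposable via ℝ^N: there are no functions (continuous or not) φ : ℝ → ℝ^N and ρ : ℝ^N → ℝ such that f(x) = ρ(max_{i} φ(xᵢ)) for all x ∈ ℝ^M, where the max is taken coordinatewise in ℝ^N. In particular the sum function f(x) = ∑_{i=1}^M xᵢ is not max-decomposable via ℝ^N. -/
/-- For `M > N ≥ 1` there is a continuous permutation-invariant function on
`ℝ^M` which is not max-decomposable via `ℝ^N` (even discontinuously); in
particular, the sum function is such a witness. -/
theorem stmt_11 {M N : ℕ} (hN : 0 < N) (hMN : N < M) :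
    ∃ f : (Fin M → ℝ) → ℝ,
      Continuous f ∧
      (∀ (x : Fin M → ℝ) (π : Equiv.Perm (Fin M)), f (x ∘ π) = f x) ∧
      (¬ ∃ (φ : ℝ → Fin N → ℝ) (ρ : (Fin N → ℝ) → ℝ),
          ∀ x : Fin M → ℝ,
            f x = ρ (fun q =>
              Finset.univ.sup'
                (Finset.univ_nonempty_iff.mpr
                  ⟨⟨0, lt_of_le_of_lt (Nat.zero_le N) hMN⟩⟩)
                (fun i => φ (x i) q))) ∧
      f = fun x => ∑ i, x i := by
  refine ⟨fun x => ∑ i, x i, ?_, ?_, ?_, rfl⟩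
  · exact continuous_finset_sum _ fun i _ => continuous_apply i
  · intro x π
    exact Equiv.sum_comp π x
  · rintro ⟨φ, ρ, h⟩
    set ne : (Finset.univ : Finset (Fin M)).Nonempty :=
      Finset.univ_nonempty_iff.mpr ⟨⟨0, lt_of_le_of_lt (Nat.zero_le N) hMN⟩⟩ with hne
    set x : Fin M → ℝ := fun i => (i : ℝ) with hx
    -- for each coordinate pick an argmax index
    have hg : ∀ q : Fin N, ∃ i : Fin M,
        Finset.univ.sup' ne (fun i => φ (x i) q) = φ (x i) q := by
      intro q
      obtain ⟨b, -, hb⟩ := Finset.exists_mem_eq_sup' ne (fun i => φ (x i) q)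
      exact ⟨b, hb⟩
    choose g hgspec using hg
    -- find j avoided by all argmaxes
    have hcard : (Finset.image g Finset.univ).card < (Finset.univ : Finset (Fin M)).card := by
      calc (Finset.image g Finset.univ).card ≤ (Finset.univ : Finset (Fin N)).card :=
            Finset.card_image_le
        _ = N := by simp
        _ < M := hMN
        _ = (Finset.univ : Finset (Fin M)).card := by simp
    obtain ⟨j, hj⟩ : ∃ j : Fin M, j ∉ Finset.image g Finset.univ := by
      by_contra hc
      push_neg at hc
      rw [Finset.eq_univ_iff_forall.mpr hc] at hcard
      exact lt_irrefl _ hcard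
    have hgj : ∀ q, g q ≠ j := by
      intro q hq
      exact hj (hq ▸ Finset.mem_image_of_mem g (Finset.mem_univ q))
    -- pick k ≠ j
    haveI : Nontrivial (Fin M) := Fin.nontrivial_iff_two_le.mpr (by omega)
    obtain ⟨k, hk⟩ := exists_ne j
    set y : Fin M → ℝ := Function.update x j (x k) with hy
    have hsup : ∀ q, Finset.univ.sup' ne (fun i => φ (y i) q)
        = Finset.univ.sup' ne (fun i => φ (x i) q) := by
      intro q
      apply le_antisymm
      · apply Finset.sup'_le
        intro i _
        by_cases hi : i = j
        · subst hi
          simp only [hy, Function.update_self]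
          exact Finset.le_sup' (fun i => φ (x i) q) (Finset.mem_univ k)
        · simp only [hy, Function.update_of_ne hi]
          exact Finset.le_sup' (fun i => φ (x i) q) (Finset.mem_univ i)
      · rw [hgspec q]
        have : φ (x (g q)) q = φ (y (g q)) q := by
          simp [hy, Function.update_of_ne (hgj q)]
        rw [this]
        exact Finset.le_sup' (fun i => φ (y i) q) (Finset.mem_univ (g q))
    have hsum : ∑ i, y i = ∑ i, x i := by
      exact (h y).trans ((congrArg ρ (funext hsup)).trans (h x).symm)
    -- but the sums differ
    have hxy : ∑ i, y i = x k + ∑ i ∈ Finset.univ.erase j, x i := by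
      rw [hy, Finset.sum_update_of_mem (Finset.mem_univ j)]
      congr 1
      exact Finset.sum_congr (by rw [Finset.sdiff_singleton_eq_erase]) fun i _ => rfl
    have hxx : ∑ i, x i = x j + ∑ i ∈ Finset.univ.erase j, x i :=
      (Finset.add_sum_erase _ x (Finset.mem_univ j)).symm
    rw [hxy, hxx] at hsum
    have hsum := add_right_cancel hsum
    have : (k : ℝ) = (j : ℝ) := hsum
    exact hk (Fin.val_injective (Nat.cast_injective this))
end

section
/- Suppose ρ : ℝ → ℝ and φ : ℚ → ℝ satisfy sup(X) = ρ(∑_{x∈X} φ(x)) for every finite nonempty subset X ⊂ ℚ (where the sum is required to be absolutely convergent for all bounded-above X). Then φ(q) ≠ 0 for every q ∈ ℚ, and φ is discontinuous at every point of ℚ. -/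
/-- If `(ρ, φ)` sum-decomposes `sup` on finite nonempty subsets of `ℚ` (with
absolute convergence of `∑ φ` over every bounded-above subset), then `φ` is
nowhere zero and discontinuous at every rational. -/
theorem stmt_13 (ρ : ℝ → ℝ) (φ : ℚ → ℝ)
    (hsum : ∀ X : Set ℚ, BddAbove X → Summable fun x : X => |φ x|)
    (h : ∀ (X : Finset ℚ) (hX : X.Nonempty),
      ((X.sup' hX id : ℚ) : ℝ) = ρ (∑ q ∈ X, φ q)) :
    (∀ q : ℚ, φ q ≠ 0) ∧ ∀ q : ℚ, ¬ ContinuousAt φ q := by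
  have hρ : ∀ q : ℚ, ρ (φ q) = (q : ℝ) := by
    intro q
    have := h {q} ⟨q, by simp⟩
    simpa using this.symm
  have hne : ∀ q : ℚ, φ q ≠ 0 := by
    intro q hq
    have h2 := h {q - 1, q} ⟨q, by simp⟩
    have hmem : q - 1 ∉ ({q} : Finset ℚ) := by
      simp only [Finset.mem_singleton]
      intro hh; linarith
    rw [Finset.sum_insert hmem, Finset.sum_singleton, hq, add_zero, hρ] at h2
    have hsup : ({q - 1, q} : Finset ℚ).sup' ⟨q, by simp⟩ id = q := by
      rw [Finset.sup'_insert, Finset.sup'_singleton]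
      simp only [id]
      exact sup_eq_right.mpr (by linarith)
      exact Finset.singleton_nonempty q
    rw [hsup] at h2
    have : q = q - 1 := by exact_mod_cast h2
    linarith
  refine ⟨hne, fun q hc => ?_⟩
  set S : Set ℚ := {x | x ≤ q} with hSdef
  have hS : BddAbove S := ⟨q, fun x hx => hx⟩
  have hcof := (hsum S hS).tendsto_cofinite_zero
  have hmem : ∀ n : ℕ, q - 1 / (n + 1) ∈ S := by
    intro n
    have : (0 : ℚ) < 1 / (n + 1) := by positivity
    simp only [hSdef, Set.mem_setOf_eq]
    linarith
  set u : ℕ → S := fun n => ⟨q - 1 / (n + 1), hmem n⟩ with hu_def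
  have hu_inj : Function.Injective u := by
    intro m n hmn
    have h1 : q - 1 / ((m : ℚ) + 1) = q - 1 / ((n : ℚ) + 1) :=
      Subtype.ext_iff.mp hmn
    have h2 : (1 : ℚ) / ((m : ℚ) + 1) = 1 / ((n : ℚ) + 1) := by linarith
    have hm : ((m : ℚ) + 1) ≠ 0 := by positivity
    have hn : ((n : ℚ) + 1) ≠ 0 := by positivity
    field_simp at h2
    exact_mod_cast (add_right_cancel h2).symm
  have hu : Filter.Tendsto u Filter.atTop (Filter.cofinite) := by
    rw [← Nat.cofinite_eq_atTop]
    exact hu_inj.tendsto_cofinite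
  have h0 : Filter.Tendsto (fun n => |φ (u n)|) Filter.atTop (nhds 0) :=
    hcof.comp hu
  have hq1 : Filter.Tendsto (fun n : ℕ => (1 : ℚ) / (n + 1)) Filter.atTop (nhds 0) := by
    simp only [one_div]
    exact tendsto_inv_atTop_zero.comp
      (Filter.tendsto_atTop_add_const_right _ 1 tendsto_natCast_atTop_atTop)
  have hq2 : Filter.Tendsto (fun n : ℕ => q - 1 / (n + 1)) Filter.atTop (nhds q) := by
    have := Filter.Tendsto.const_sub q hq1
    simpa using this
  have h1 : Filter.Tendsto (fun n : ℕ => |φ (q - 1 / (n + 1))|) Filter.atTop (nhds |φ q|) :=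
    ((hc.tendsto.comp hq2).abs)
  have heq : |φ q| = 0 := tendsto_nhds_unique h1 h0
  exact hne q (abs_eq_zero.mp heq)
end

section
/- There exists a subset D ⊂ ℝ of cardinality continuum which is finite-sum-distinct: for any two distinct finite subsets A, B ⊂ D, the sums ∑_{a∈A} a and ∑_{b∈B} b are distinct. -/
/-- There is a finite-sum-distinct subset of `ℝ` of cardinality continuum:
distinct finite subsets of it always have distinct sums. -/
theorem stmt_14 :
    ∃ D : Set ℝ, Cardinal.mk D = Cardinal.continuum ∧
      ∀ A B : Finset ℝ, ↑A ⊆ D → ↑B ⊆ D → A ≠ B →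
        (∑ a ∈ A, a) ≠ ∑ b ∈ B, b := by
  refine ⟨Module.Basis.ofVectorSpaceIndex ℚ ℝ, ?_, ?_⟩
  · rw [← Real.rank_rat_real]
    exact Module.Basis.mk_eq_rank'' (Module.Basis.ofVectorSpace ℚ ℝ)
  · intro A B hA hB hAB hsum
    have hli := Module.Basis.ofVectorSpaceIndex.linearIndependent ℚ ℝ
    rw [linearIndependent_subtype_iff, linearIndepOn_iff] at hli
    set l : ℝ →₀ ℚ :=
      (∑ a ∈ A, Finsupp.single a 1) - (∑ b ∈ B, Finsupp.single b 1) with hl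
    have hlapp : ∀ x, l x = (if x ∈ A then (1:ℚ) else 0) - (if x ∈ B then (1:ℚ) else 0) := by
      intro x
      simp [hl, Finsupp.single_apply, Finset.sum_ite_eq', Finsupp.coe_sub]
    have hsupp : l ∈ Finsupp.supported ℚ ℚ (Module.Basis.ofVectorSpaceIndex ℚ ℝ) := by
      intro x hx
      rw [Finset.mem_coe, Finsupp.mem_support_iff, hlapp x] at hx
      by_cases hxA : x ∈ A
      · exact hA hxA
      · by_cases hxB : x ∈ B
        · exact hB hxB
        · simp [hxA, hxB] at hx
    have hcomb : Finsupp.linearCombination ℚ (id : ℝ → ℝ) l = 0 := by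
      simp only [hl, map_sub, map_sum, Finsupp.linearCombination_single, one_smul, id]
      rw [hsum, sub_self]
    have hl0 := hli l hsupp hcomb
    apply hAB
    ext x
    have := hlapp x
    rw [hl0] at this
    simp only [Finsupp.coe_zero, Pi.zero_apply] at this
    by_cases hxA : x ∈ A <;> by_cases hxB : x ∈ B <;> simp [hxA, hxB] at this ⊢
end

section
/- Every function f from the set of finite subsets of ℝ to ℝ is sum-decomposable via ℝ: there exist functions φ : ℝ → ℝ and ρ : ℝ → ℝ such that f(X) = ρ(∑_{x∈X} φ(x)) for every finite X ⊂ ℝ. -/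
open Cardinal

/-- There is a family indexed by `ℝ` that is `ℚ`-linearly independent in `ℝ`. -/
lemma exists_li : ∃ φ : ℝ → ℝ, LinearIndependent ℚ φ := by
  let b := Module.Basis.ofVectorSpace ℚ ℝ
  have hcard : #(Module.Basis.ofVectorSpaceIndex ℚ ℝ) = #ℝ := by
    rw [b.mk_eq_rank'', Real.rank_rat_real, Cardinal.mk_real]
  obtain ⟨e⟩ := Cardinal.eq.mp hcard.symm
  exact ⟨fun r => b (e r), b.linearIndependent.comp e e.injective⟩

lemma sum_injective {φ : ℝ → ℝ} (hφ : LinearIndependent ℚ φ) :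
    Function.Injective fun X : Finset ℝ => ∑ x ∈ X, φ x := by
  intro X Y h
  classical
  have key : ∀ Z : Finset ℝ,
      Finsupp.linearCombination ℚ φ (Finsupp.indicator Z (fun _ _ => (1:ℚ))) = ∑ x ∈ Z, φ x := by
    intro Z
    rw [Finsupp.linearCombination_apply, Finsupp.sum_indicator_index]
    · simp
    · intro i _; simp
  have h0 : Finsupp.linearCombination ℚ φ
      (Finsupp.indicator X (fun _ _ => (1:ℚ)) - Finsupp.indicator Y (fun _ _ => (1:ℚ))) = 0 := by
    rw [map_sub, key X, key Y]
    simp only at h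
    rw [h, sub_self]
  have := linearIndependent_iff.mp hφ _ h0
  have heq : Finsupp.indicator X (fun _ _ => (1:ℚ)) = Finsupp.indicator Y (fun _ _ => (1:ℚ)) :=
    sub_eq_zero.mp this
  ext a
  have := DFunLike.congr_fun heq a
  simp only [Finsupp.indicator_apply] at this
  by_cases hx : a ∈ X <;> by_cases hy : a ∈ Y <;> simp [hx, hy] at this ⊢

/-- Every function on finite subsets of `ℝ` is sum-decomposable via `ℝ`
(with no continuity requirement). -/
theorem stmt_15 (f : Finset ℝ → ℝ) :
    ∃ (φ : ℝ → ℝ) (ρ : ℝ → ℝ), ∀ X : Finset ℝ, f X = ρ (∑ x ∈ X, φ x) := by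
  obtain ⟨φ, hφ⟩ := exists_li
  have hinj := sum_injective hφ
  refine ⟨φ, fun s => f (Function.invFun (fun X : Finset ℝ => ∑ x ∈ X, φ x) s), fun X => ?_⟩
  exact congrArg f (Function.leftInverse_invFun hinj X).symm
end

section
/- There is no continuous quasi-sorting function on pairs of points in the plane: there is no continuous map g : ℝ^{2×2} → ℝ^{2×2} such that (i) g(x) = g(πx) for the row-swap permutation π, and (ii) for every x there is a permutation π of the rows with g(πx) = πx. -/
noncomputable def P17 (t : ℝ) : Fin 2 → Fin 2 → ℝ :=
  ![![Real.cos (Real.pi * t), Real.sin (Real.pi * t)],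
    ![-Real.cos (Real.pi * t), -Real.sin (Real.pi * t)]]

lemma P17_cont : Continuous P17 := by
  apply continuous_pi; intro i; apply continuous_pi; intro j
  fin_cases i <;> fin_cases j <;> simp [P17] <;> continuity

/-- There is no continuous quasi-sorting function on pairs of points in the
plane: no continuous `g` on `2×2` matrices that is invariant under row
permutations and maps each matrix to one of its own row permutations. -/
theorem stmt_17 :
    ¬ ∃ g : (Fin 2 → Fin 2 → ℝ) → Fin 2 → Fin 2 → ℝ,
      Continuous g ∧
      (∀ (x : Fin 2 → Fin 2 → ℝ) (π : Equiv.Perm (Fin 2)), g (x ∘ π) = g x) ∧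
      (∀ x : Fin 2 → Fin 2 → ℝ, ∃ π : Equiv.Perm (Fin 2), g (x ∘ π) = x ∘ π) := by
  rintro ⟨g, hc, hinv, hsel⟩
  set s : ℝ → ℝ := fun t =>
    g (P17 t) 0 0 * Real.cos (Real.pi * t) + g (P17 t) 0 1 * Real.sin (Real.pi * t)
    with hs
  have hgc : Continuous fun t => g (P17 t) := hc.comp P17_cont
  have h00 : Continuous fun t => g (P17 t) 0 0 :=
    (continuous_apply 0).comp ((continuous_apply 0).comp hgc)
  have h01 : Continuous fun t => g (P17 t) 0 1 :=
    (continuous_apply 1).comp ((continuous_apply 0).comp hgc)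
  have hpc : Continuous fun t : ℝ => Real.cos (Real.pi * t) :=
    Real.continuous_cos.comp (continuous_const.mul continuous_id)
  have hps : Continuous fun t : ℝ => Real.sin (Real.pi * t) :=
    Real.continuous_sin.comp (continuous_const.mul continuous_id)
  have hscont : Continuous s := (h00.mul hpc).add (h01.mul hps)
  have hfin : ∀ i : Fin 2, i = 0 ∨ i = 1 := by decide
  have hval : ∀ t, s t = 1 ∨ s t = -1 := by
    intro t
    obtain ⟨π, hπ⟩ := hsel (P17 t)
    have hg : g (P17 t) = P17 t ∘ π := by rw [← hinv (P17 t) π, hπ]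
    rcases hfin (π 0) with h | h
    · left
      have e : ∀ j, g (P17 t) 0 j = P17 t 0 j := by
        intro j; rw [hg]; simp [Function.comp, h]
      simp only [hs]
      rw [e 0, e 1]
      simp only [P17, Matrix.cons_val_zero, Matrix.cons_val_one, Matrix.head_cons]
      nlinarith [Real.sin_sq_add_cos_sq (Real.pi * t)]
    · right
      have e : ∀ j, g (P17 t) 0 j = P17 t 1 j := by
        intro j; rw [hg]; simp [Function.comp, h]
      simp only [hs]
      rw [e 0, e 1]
      simp only [P17, Matrix.cons_val_zero, Matrix.cons_val_one, Matrix.head_cons]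
      nlinarith [Real.sin_sq_add_cos_sq (Real.pi * t)]
  have hswap : P17 1 = P17 0 ∘ (Equiv.swap 0 1 : Equiv.Perm (Fin 2)) := by
    funext i j
    fin_cases i <;> fin_cases j <;>
      simp [P17, Real.cos_pi, Real.sin_pi, Equiv.swap_apply_def]
  have hg01 : g (P17 1) = g (P17 0) := by rw [hswap]; exact hinv _ _
  have hs0 : s 0 = g (P17 0) 0 0 := by simp [hs]
  have hs1 : s 1 = - g (P17 0) 0 0 := by
    simp [hs, hg01, Real.cos_pi, Real.sin_pi]
  rcases hval 0 with h0 | h0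
  · have h1 : s 1 = -1 := by rw [hs1, ← hs0, h0]
    have hmem : (0 : ℝ) ∈ Set.Icc (s 1) (s 0) := by
      rw [h0, h1]; norm_num
    obtain ⟨t, _, ht⟩ := intermediate_value_Icc' (by norm_num : (0:ℝ) ≤ 1)
      hscont.continuousOn hmem
    rcases hval t with h | h <;> rw [ht] at h <;> norm_num at h
  · have h1 : s 1 = 1 := by rw [hs1, ← hs0, h0]; ring
    have hmem : (0 : ℝ) ∈ Set.Icc (s 0) (s 1) := by
      rw [h0, h1]; norm_num
    obtain ⟨t, _, ht⟩ := intermediate_value_Icc (by norm_num : (0:ℝ) ≤ 1)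
      hscont.continuousOn hmem
    rcases hval t with h | h <;> rw [ht] at h <;> norm_num at h
end

section
/- If Φ(X) = ∑_{x∈X} φ(x) satisfies sup(X) = ρ(Φ(X)) for all finite nonempty bounded X ⊂ ℚ, then Φ(X) is finite (the sum converges absolutely) for every upper-bounded X ⊂ ℚ, and for each n ∈ ℕ and each upper-bounded X only finitely many x ∈ X have φ(x) > 1/n. -/
open scoped BigOperators Classical

/-- The (possibly infinite) sum `Φ(X) = ∑_{x ∈ X} φ(x)`, defined as the
absolutely convergent sum when it exists and `∞` otherwise. -/
noncomputable def PhiSum (φ : ℚ → ℝ) (X : Set ℚ) : EReal :=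
  if Summable fun x : X => |φ x| then ((∑' x : X, φ x : ℝ) : EReal) else ⊤

lemma summable_subset {φ : ℚ → ℝ} {X Y : Set ℚ} (hXY : X ⊆ Y)
    (hY : Summable fun x : Y => |φ x|) : Summable fun x : X => |φ x| := by
  rw [show (fun x : Y => |φ x|) = ((fun q => |φ q|) ∘ (Subtype.val : Y → ℚ)) from rfl,
    summable_subtype_iff_indicator] at hY
  rw [show (fun x : X => |φ x|) = ((fun q => |φ q|) ∘ (Subtype.val : X → ℚ)) from rfl,
    summable_subtype_iff_indicator]
  have := hY.indicator X
  rwa [Set.indicator_indicator, Set.inter_eq_self_of_subset_left hXY] at this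

/-- If `sup X = ρ (Φ X)` for every nonempty upper-bounded `X ⊆ ℚ`, then `Φ X`
is finite (the sum converges absolutely) for every upper-bounded `X`, and for
each `n ≥ 1` only finitely many `x ∈ X` have `φ x > 1/n`. -/
theorem stmt_18 (ρ : EReal → ℝ) (φ : ℚ → ℝ)
    (h : ∀ X : Set ℚ, X.Nonempty → BddAbove X →
      sSup ((fun q : ℚ => (q : ℝ)) '' X) = ρ (PhiSum φ X)) :
    ∀ X : Set ℚ, BddAbove X →
      (Summable fun x : X => |φ x|) ∧
      ∀ n : ℕ, 0 < n → {x ∈ X | 1 / (n : ℝ) < φ x}.Finite := by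
  intro X hbdd
  have hsum : Summable fun x : X => |φ x| := by
    rcases X.eq_empty_or_nonempty with rfl | hne
    · have : IsEmpty (↥(∅ : Set ℚ)) := Set.isEmpty_coe_sort.mpr rfl
      exact summable_empty
    · by_contra hns
      have h1 := h X hne hbdd
      obtain ⟨b, hb⟩ := hbdd
      set q : ℚ := b + 1 with hq
      set X' : Set ℚ := insert q X with hX'
      have hqX : ∀ x ∈ X, x < q := fun x hx => lt_of_le_of_lt (hb hx) (lt_add_one b)
      have hns' : ¬ Summable fun x : X' => |φ x| := fun hs =>
        hns (summable_subset (Set.subset_insert q X) hs)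
      have h2 := h X' ⟨q, Set.mem_insert q X⟩
        ⟨q, fun x hx => by
          rcases hx with rfl | hx
          · exact le_refl _
          · exact (hqX x hx).le⟩
      rw [PhiSum, if_neg hns] at h1
      rw [PhiSum, if_neg hns'] at h2
      replace h1 : sSup ((fun q : ℚ => (q : ℝ)) '' X) = sSup ((fun q : ℚ => (q : ℝ)) '' X') :=
        h1.trans h2.symm
      have hbddR : BddAbove ((fun q : ℚ => (q : ℝ)) '' X) :=
        ⟨(b : ℝ), by rintro _ ⟨x, hx, rfl⟩; exact Rat.cast_le.mpr (hb hx)⟩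
      have hbddR' : BddAbove ((fun q : ℚ => (q : ℝ)) '' X') :=
        ⟨(q : ℝ), by rintro _ ⟨x, hx, rfl⟩
                     rcases hx with rfl | hx
                     · exact le_refl _
                     · exact Rat.cast_le.mpr (hqX x hx).le⟩
      have hle : sSup ((fun q : ℚ => (q : ℝ)) '' X) ≤ (b : ℝ) := by
        apply csSup_le (hne.image _)
        rintro _ ⟨x, hx, rfl⟩; exact Rat.cast_le.mpr (hb hx)
      have hge : (q : ℝ) ≤ sSup ((fun q : ℚ => (q : ℝ)) '' X') :=
        le_csSup hbddR' ⟨q, Set.mem_insert q X, rfl⟩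
      have : (q : ℝ) ≤ (b : ℝ) := by
        calc (q : ℝ) ≤ _ := hge
        _ = _ := h1.symm
        _ ≤ (b : ℝ) := hle
      have : (b : ℝ) < (q : ℝ) := by exact_mod_cast lt_add_one b
      linarith
  refine ⟨hsum, ?_⟩
  intro n hn
  by_contra hinf
  set S : Set ℚ := {x ∈ X | 1 / (n : ℝ) < φ x} with hS
  have hsub : S ⊆ X := fun x hx => hx.1
  have hsumS : Summable fun x : S => |φ x| := summable_subset hsub hsum
  have hpos : (0 : ℝ) < 1 / (n : ℝ) := by positivity
  have : Infinite ↥S := (Set.infinite_coe_iff.mpr hinf)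
  have hev : ∀ᶠ x : S in Filter.cofinite, |φ (x : ℚ)| < 1 / (n : ℝ) :=
    hsumS.tendsto_cofinite_zero.eventually (gt_mem_nhds hpos)
  obtain ⟨x, hx⟩ := hev.exists
  have : 1 / (n : ℝ) < φ (x : ℚ) := x.2.2
  have : 1 / (n : ℝ) < |φ (x : ℚ)| := lt_of_lt_of_le this (le_abs_self _)
  linarith
end

section
/- Let f : ℝ^M → ℝ be continuous and permutation-invariant, and let 1 ≤ k ≤ M. Then f has a continuous k-ary Janossy representation via ℝ^M: there exist continuous φ : ℝ^k → ℝ^M and ρ : ℝ^M → ℝ such that f(x) = ρ(∑_{t} φ(t)), where the sum runs over all ordered k-tuples t of distinct coordinate indices of x. -/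
open Filter Set Finset

noncomputable def S0 (M : ℕ) (x : Fin M → ℝ) : Fin M → ℝ :=
  fun j => ∑ i, x i ^ ((j : ℕ) + 1)

lemma S0_cont (M : ℕ) : Continuous (S0 M) := by
  refine continuous_pi fun j => ?_
  exact continuous_finset_sum _ fun i _ => (continuous_apply i).pow _

lemma aeval_psum {M : ℕ} (x : Fin M → ℝ) (n : ℕ) :
    (MvPolynomial.aeval x (MvPolynomial.psum (Fin M) ℝ n) : ℝ) = ∑ i, x i ^ n := by
  simp [MvPolynomial.psum]

lemma S0_perm {M : ℕ} {x y : Fin M → ℝ} (h : S0 M x = S0 M y) :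
    ∃ π : Equiv.Perm (Fin M), x = y ∘ π := by
  have hP : ∀ n, 1 ≤ n → n ≤ M →
      (MvPolynomial.aeval (-x) (MvPolynomial.psum (Fin M) ℝ n) : ℝ)
        = MvPolynomial.aeval (-y) (MvPolynomial.psum (Fin M) ℝ n) := by
    intro n h1 h2
    have hj : n - 1 < M := by omega
    have hxy := congrFun h ⟨n - 1, hj⟩
    simp only [S0] at hxy
    have hn : n - 1 + 1 = n := by omega
    rw [hn] at hxy
    rw [aeval_psum, aeval_psum]
    have hx : ∀ z : Fin M → ℝ, ∑ i, (-z) i ^ n = (-1 : ℝ) ^ n * ∑ i, z i ^ n := by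
      intro z
      rw [Finset.mul_sum]
      refine Finset.sum_congr rfl fun i _ => ?_
      rw [Pi.neg_apply, neg_pow]
    rw [hx, hx, hxy]
  have hE : ∀ n, n ≤ M →
      (MvPolynomial.aeval (-x) (MvPolynomial.esymm (Fin M) ℝ n) : ℝ)
        = MvPolynomial.aeval (-y) (MvPolynomial.esymm (Fin M) ℝ n) := by
    intro n
    induction n using Nat.strong_induction_on with
    | _ n ih =>
      intro hnM
      rcases Nat.eq_zero_or_pos n with h0 | h1
      · subst h0; simp [MvPolynomial.esymm_zero]
      · have hid := congrArg (MvPolynomial.aeval (R := ℝ) (-x))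
          (MvPolynomial.mul_esymm_eq_sum (Fin M) ℝ n)
        have hid' := congrArg (MvPolynomial.aeval (R := ℝ) (-y))
          (MvPolynomial.mul_esymm_eq_sum (Fin M) ℝ n)
        simp only [map_mul, map_sum, map_pow, map_natCast, map_neg, map_one] at hid hid'
        have hsum : ∑ a ∈ Finset.HasAntidiagonal.antidiagonal n with a.1 < n,
              (-1 : ℝ) ^ a.1 * MvPolynomial.aeval (-x) (MvPolynomial.esymm (Fin M) ℝ a.1)
                * MvPolynomial.aeval (-x) (MvPolynomial.psum (Fin M) ℝ a.2)
            = ∑ a ∈ Finset.HasAntidiagonal.antidiagonal n with a.1 < n,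
              (-1 : ℝ) ^ a.1 * MvPolynomial.aeval (-y) (MvPolynomial.esymm (Fin M) ℝ a.1)
                * MvPolynomial.aeval (-y) (MvPolynomial.psum (Fin M) ℝ a.2) := by
          refine Finset.sum_congr rfl fun a ha => ?_
          simp only [Finset.mem_filter, Finset.HasAntidiagonal.mem_antidiagonal] at ha
          rw [ih a.1 (by omega) (by omega), hP a.2 (by omega) (by omega)]
        have hfin : (n : ℝ) * MvPolynomial.aeval (-x) (MvPolynomial.esymm (Fin M) ℝ n)
            = (n : ℝ) * MvPolynomial.aeval (-y) (MvPolynomial.esymm (Fin M) ℝ n) := by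
          rw [hid, hid', hsum]
        exact mul_left_cancel₀ (Nat.cast_ne_zero.mpr (by omega)) hfin
  have hms : (Finset.univ.val.map x) = (Finset.univ.val.map y) := by
    have hcardx : Multiset.card (Finset.univ.val.map (-x)) = M := by simp
    have hcardy : Multiset.card (Finset.univ.val.map (-y)) = M := by simp
    have hesymm : ∀ j ≤ M, ((Finset.univ.val.map (-x)).esymm j)
        = ((Finset.univ.val.map (-y)).esymm j) := by
      intro j hj
      rw [← MvPolynomial.aeval_esymm_eq_multiset_esymm (Fin M) ℝ j (-x),
        ← MvPolynomial.aeval_esymm_eq_multiset_esymm (Fin M) ℝ j (-y)]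
      exact hE j hj
    have hprod : ((Finset.univ.val.map (-x)).map fun r => Polynomial.X + Polynomial.C r).prod
        = ((Finset.univ.val.map (-y)).map fun r => Polynomial.X + Polynomial.C r).prod := by
      rw [Multiset.prod_X_add_C_eq_sum_esymm, Multiset.prod_X_add_C_eq_sum_esymm,
        hcardx, hcardy]
      refine Finset.sum_congr rfl fun j hj => ?_
      rw [hesymm j (Nat.lt_succ_iff.mp (Finset.mem_range.mp hj))]
    have hrw : ∀ z : Fin M → ℝ,
        ((Finset.univ.val.map (-z)).map fun r => Polynomial.X + Polynomial.C r)
        = ((Finset.univ.val.map z).map fun a => Polynomial.X - Polynomial.C a) := by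
      intro z
      rw [Multiset.map_map, Multiset.map_map]
      refine Multiset.map_congr rfl fun i _ => ?_
      simp [sub_eq_add_neg]
    rw [hrw x, hrw y] at hprod
    have hroots := congrArg Polynomial.roots hprod
    rwa [Polynomial.roots_multiset_prod_X_sub_C, Polynomial.roots_multiset_prod_X_sub_C]
      at hroots
  have hlist : List.Perm (List.ofFn x) (List.ofFn y) := by
    rw [← Multiset.coe_eq_coe, ← Fin.univ_val_map, ← Fin.univ_val_map]
    exact hms
  set σ := Tuple.sort x with hσ
  set τ := Tuple.sort y with hτ
  have hsx : (List.ofFn (x ∘ σ)).Pairwise (· ≤ ·) := (Tuple.monotone_sort x).sortedLE_ofFn.pairwise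
  have hsy : (List.ofFn (y ∘ τ)).Pairwise (· ≤ ·) := (Tuple.monotone_sort y).sortedLE_ofFn.pairwise
  have hperm : List.Perm (List.ofFn (x ∘ σ)) (List.ofFn (y ∘ τ)) :=
    (σ.ofFn_comp_perm x).trans (hlist.trans (τ.ofFn_comp_perm y).symm)
  have heq : x ∘ σ = y ∘ τ :=
    List.ofFn_injective (List.Perm.eq_of_pairwise' hsx hsy hperm)
  refine ⟨σ.symm.trans τ, funext fun i => ?_⟩
  have hne := congrFun heq (σ.symm i)
  simp only [Function.comp_apply, Equiv.apply_symm_apply] at hne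
  simpa [Function.comp_apply, Equiv.trans_apply] using hne

lemma S0_proper {M : ℕ} (hM : 1 ≤ M) : IsProperMap (S0 M) := by
  rw [isProperMap_iff_isCompact_preimage]
  refine ⟨S0_cont M, fun K hK => ?_⟩
  obtain ⟨r, hr⟩ := isBounded_iff_forall_norm_le.mp hK.isBounded
  refine Metric.isCompact_of_isClosed_isBounded
    (hK.isClosed.preimage (S0_cont M)) ?_
  rw [isBounded_iff_forall_norm_le]
  refine ⟨max r (Real.sqrt r), fun x hx => ?_⟩
  have hSx : ‖S0 M x‖ ≤ r := hr _ hx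
  have hrle : (0 : ℝ) ≤ r := le_trans (norm_nonneg _) hSx
  rw [pi_norm_le_iff_of_nonneg (le_max_of_le_left hrle)]
  intro i
  rcases Nat.lt_or_ge 1 M with hM2 | hM1
  · have hp2 : (S0 M x) ⟨1, hM2⟩ = ∑ j, x j ^ 2 := by simp [S0]
    have hb : |x i| ≤ Real.sqrt r := by
      rw [← Real.sqrt_sq_eq_abs]
      apply Real.sqrt_le_sqrt
      calc x i ^ 2 ≤ ∑ j, x j ^ 2 :=
            Finset.single_le_sum (fun j _ => sq_nonneg (x j)) (Finset.mem_univ i)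
        _ = (S0 M x) ⟨1, hM2⟩ := hp2.symm
        _ ≤ |(S0 M x) ⟨1, hM2⟩| := le_abs_self _
        _ ≤ ‖S0 M x‖ := by
            rw [← Real.norm_eq_abs]; exact norm_le_pi_norm _ _
        _ ≤ r := hSx
    exact le_max_of_le_right hb
  · have hM1' : M = 1 := le_antisymm hM1 hM
    subst hM1'
    have hi : i = ⟨0, Nat.zero_lt_one⟩ := Subsingleton.elim _ _
    have h0 : (S0 1 x) ⟨0, Nat.zero_lt_one⟩ = x ⟨0, Nat.zero_lt_one⟩ := by
      simp [S0]
    have hb : |x ⟨0, Nat.zero_lt_one⟩| ≤ r := by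
      calc |x ⟨0, Nat.zero_lt_one⟩| = |(S0 1 x) ⟨0, Nat.zero_lt_one⟩| := by rw [h0]
        _ ≤ ‖S0 1 x‖ := by
            rw [← Real.norm_eq_abs]; exact norm_le_pi_norm _ _
        _ ≤ r := hSx
    rw [hi]
    exact le_max_of_le_left hb

/-- Every continuous permutation-invariant `f : ℝ^M → ℝ` has a continuous
`k`-ary Janossy representation via `ℝ^M`, for any `1 ≤ k ≤ M`: the sum runs
over all ordered `k`-tuples of distinct coordinate indices. -/
theorem stmt_19 {M k : ℕ} (hk : 1 ≤ k) (hkM : k ≤ M)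
    (f : (Fin M → ℝ) → ℝ) (hf : Continuous f)
    (hsym : ∀ (x : Fin M → ℝ) (π : Equiv.Perm (Fin M)), f (x ∘ π) = f x) :
    ∃ (φ : (Fin k → ℝ) → Fin M → ℝ) (ρ : (Fin M → ℝ) → ℝ),
      Continuous φ ∧ Continuous ρ ∧
      ∀ x : Fin M → ℝ,
        f x = ρ (∑ e : Fin k ↪ Fin M, φ (fun i => x (e i))) := by
  classical
  have hM : 1 ≤ M := le_trans hk hkM
  set z : Fin k := ⟨0, hk⟩ with hz
  have hcard : ∀ i j : Fin M,
      (Finset.univ.filter (fun e : Fin k ↪ Fin M => e z = i)).card =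
      (Finset.univ.filter (fun e : Fin k ↪ Fin M => e z = j)).card := by
    intro i j
    refine Finset.card_nbij' (fun e => e.trans (Equiv.swap i j).toEmbedding)
      (fun e => e.trans (Equiv.swap i j).toEmbedding) ?_ ?_ ?_ ?_
    · intro e he
      rw [Finset.mem_coe, Finset.mem_filter] at he ⊢
      refine ⟨Finset.mem_univ _, ?_⟩
      rw [Function.Embedding.trans_apply, he.2]
      simp only [Equiv.coe_toEmbedding]
      exact Equiv.swap_apply_left i j
    · intro e he
      rw [Finset.mem_coe, Finset.mem_filter] at he ⊢
      refine ⟨Finset.mem_univ _, ?_⟩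
      rw [Function.Embedding.trans_apply, he.2]
      simp only [Equiv.coe_toEmbedding]
      exact Equiv.swap_apply_right i j
    · intro e _
      ext a
      simp only [Function.Embedding.trans_apply, Equiv.coe_toEmbedding]
      exact congrArg Fin.val (Equiv.swap_apply_self i j _)
    · intro e _
      ext a
      simp only [Function.Embedding.trans_apply, Equiv.coe_toEmbedding]
      exact congrArg Fin.val (Equiv.swap_apply_self i j _)
  set i0 : Fin M := ⟨0, hM⟩ with hi0
  set c : ℕ := (Finset.univ.filter (fun e : Fin k ↪ Fin M => e z = i0)).card with hc
  have hcpos : 0 < c := by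
    rw [hc, Finset.card_pos]
    refine ⟨(Fin.castLEEmb hkM).trans
      (Equiv.swap ((Fin.castLEEmb hkM) z) i0).toEmbedding, ?_⟩
    rw [Finset.mem_filter]
    refine ⟨Finset.mem_univ _, ?_⟩
    rw [Function.Embedding.trans_apply]
    simp only [Equiv.coe_toEmbedding]
    exact Equiv.swap_apply_left _ _
  have hfiber : ∀ g : Fin M → ℝ,
      ∑ e : Fin k ↪ Fin M, g (e z) = ∑ i : Fin M, (c : ℝ) * g i := by
    intro g
    rw [← Finset.sum_fiberwise_of_maps_to' (fun e _ => Finset.mem_univ (e z)) g]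
    refine Finset.sum_congr rfl fun i _ => ?_
    rw [Finset.sum_const, hcard i i0, ← hc, nsmul_eq_mul]
  set φ : (Fin k → ℝ) → Fin M → ℝ :=
    fun t => fun j => (c : ℝ)⁻¹ * (t z) ^ ((j : ℕ) + 1) with hφ
  have hφc : Continuous φ := by
    refine continuous_pi fun j => ?_
    exact continuous_const.mul ((continuous_apply z).pow _)
  have hsumφ : ∀ x : Fin M → ℝ,
      (∑ e : Fin k ↪ Fin M, φ (fun i => x (e i))) = S0 M x := by
    intro x
    funext j
    have h1 : (∑ e : Fin k ↪ Fin M, φ (fun i => x (e i))) j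
        = ∑ e : Fin k ↪ Fin M, (c : ℝ)⁻¹ * (x (e z)) ^ ((j : ℕ) + 1) := by
      rw [Finset.sum_apply]
    rw [h1, ← Finset.mul_sum, hfiber (fun i => x i ^ ((j : ℕ) + 1)),
      ← Finset.mul_sum, ← mul_assoc, inv_mul_cancel₀ (Nat.cast_ne_zero.mpr hcpos.ne'), one_mul]
    rw [S0]
  have hproper := S0_proper hM
  have hclosed : IsClosed (Set.range (S0 M)) := hproper.isClosed_range
  set T : (Fin M → ℝ) → Set.range (S0 M) := fun x => ⟨S0 M x, Set.mem_range_self x⟩ with hT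
  have hTcont : Continuous T := (S0_cont M).subtype_mk _
  have hTclosed : IsClosedMap T := by
    intro C hC
    have himg : T '' C = Subtype.val ⁻¹' (S0 M '' C) := by
      ext y
      constructor
      · rintro ⟨x, hx, rfl⟩; exact ⟨x, hx, rfl⟩
      · rintro ⟨x, hx, hxy⟩; exact ⟨x, hx, Subtype.ext hxy⟩
    rw [himg]
    exact (hproper.isClosedMap C hC).preimage continuous_subtype_val
  have hTsurj : Function.Surjective T := by
    rintro ⟨y, x, rfl⟩; exact ⟨x, rfl⟩
  have hQT : Topology.IsQuotientMap T := hTclosed.isQuotientMap hTcont hTsurj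
  set ρ' : Set.range (S0 M) → ℝ := fun y => f (Classical.choose y.2) with hρ'
  have hρ'T : ∀ x, ρ' (T x) = f x := by
    intro x
    have hspec : S0 M (Classical.choose (T x).2) = S0 M x := Classical.choose_spec (T x).2
    obtain ⟨π, hπ⟩ := S0_perm hspec
    rw [hρ']
    simp only
    rw [hπ, hsym]
  have hρ'cont : Continuous ρ' := by
    rw [hQT.continuous_iff]
    have hcomp : ρ' ∘ T = f := funext hρ'T
    rw [hcomp]
    exact hf
  obtain ⟨g, hg⟩ := ContinuousMap.exists_restrict_eq hclosed ⟨ρ', hρ'cont⟩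
  refine ⟨φ, g, hφc, g.continuous, fun x => ?_⟩
  rw [hsumφ x]
  have hgx := DFunLike.congr_fun hg (T x)
  simp only [ContinuousMap.restrict_apply, ContinuousMap.coe_mk] at hgx
  rw [hρ'T x] at hgx
  exact hgx.symm
end
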